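/- arXiv:1705.03649 — 3 statements merged into one kernel-verified Lean document; each statement's English description precedes it below -/
import Mathlib

section
/- Let H be a real Hilbert space with inner product a(·,·) and norm ‖·‖_a, V a finite-dimensional real vector space, E : V → H linear, s : V × V → ℝ a symmetric positive-semidefinite bilinear form satisfying s(w,v) ≤ C̃₀ s(w,w)^{1/2} s(v,v)^{1/2} for all w,v ∈ V with some constant C̃₀ ≥ 1. Suppose u ∈ H and u_h ∈ V satisfy a(u - E u_h, E v_h) = s(u_h, v_h) for all v_h ∈ V. Then ‖u - E u_h‖_a² + s(u_h,u_h) ≤ inf_{v_h ∈ V} ( ‖u - E v_h‖_a² + C̃₀² s(v_h,v_h) ). -/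
/-!
Testing the orthogonality relation with `vh - uh` turns the error `e = u - E uh` into the energy
identity `‖e‖² + s(uh, uh) = a(e, u - E vh) + s(uh, vh)`. Cauchy–Schwarz in `H`, the generalized
Cauchy–Schwarz bound on `s` and Young's inequality bound the right-hand side by half of the left-hand
side plus half of `‖u - E vh‖² + C0² s(vh, vh)`; absorbing gives the claim.
-/

open scoped InnerProductSpace

theorem real_inner_le_half_norm_sq_add_half_norm_sq {F : Type*} [NormedAddCommGroup F]
    [InnerProductSpace ℝ F] (x y : F) : ⟪x, y⟫_ℝ ≤ ‖x‖ ^ 2 / 2 + ‖y‖ ^ 2 / 2 := by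
  linarith [real_inner_le_norm x y, two_mul_le_add_sq ‖x‖ ‖y‖]

theorem mul_sqrt_mul_sqrt_le_half_add_half_sq_mul {a b : ℝ} (ha : 0 ≤ a) (hb : 0 ≤ b) (C : ℝ) :
    C * √a * √b ≤ a / 2 + C ^ 2 * b / 2 := by
  have hyoung := two_mul_le_add_sq (√a) (C * √b)
  rw [mul_pow, Real.sq_sqrt ha, Real.sq_sqrt hb] at hyoung
  linarith

theorem norm_sq_add_eq_inner_add_of_galerkin_orthogonal {H V : Type*} [NormedAddCommGroup H]
    [InnerProductSpace ℝ H] [AddCommGroup V] [Module ℝ V] (E : V →ₗ[ℝ] H)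
    (s : V →ₗ[ℝ] V →ₗ[ℝ] ℝ) {u : H} {uh : V} (horth : ∀ vh, ⟪u - E uh, E vh⟫_ℝ = s uh vh)
    (vh : V) : ‖u - E uh‖ ^ 2 + s uh uh = ⟪u - E uh, u - E vh⟫_ℝ + s uh vh := by
  have hsplit : u - E uh = (u - E vh) + E (vh - uh) := by rw [map_sub]; abel
  calc ‖u - E uh‖ ^ 2 + s uh uh = ⟪u - E uh, (u - E vh) + E (vh - uh)⟫_ℝ + s uh uh := by
        rw [← hsplit, real_inner_self_eq_norm_sq]
    _ = ⟪u - E uh, u - E vh⟫_ℝ + s uh vh := by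
        rw [inner_add_right, horth, map_sub]; ring

theorem rfem_cea_quasi_optimality_general
    {H V : Type*} [NormedAddCommGroup H] [InnerProductSpace ℝ H]
    [AddCommGroup V] [Module ℝ V]
    (E : V →ₗ[ℝ] H) (s : V →ₗ[ℝ] V →ₗ[ℝ] ℝ)
    (hspos : ∀ v : V, 0 ≤ s v v)
    (C0 : ℝ)
    (hCS : ∀ w v : V, s w v ≤ C0 * Real.sqrt (s w w) * Real.sqrt (s v v))
    (u : H) (uh : V)
    (horth : ∀ vh : V, (inner ℝ (u - E uh) (E vh) : ℝ) = s uh vh) :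
    ∀ vh : V, ‖u - E uh‖ ^ 2 + s uh uh ≤ ‖u - E vh‖ ^ 2 + C0 ^ 2 * s vh vh := by
  intro vh
  have henergy := norm_sq_add_eq_inner_add_of_galerkin_orthogonal E s horth vh
  have hinner := real_inner_le_half_norm_sq_add_half_norm_sq (u - E uh) (u - E vh)
  have hs := (hCS uh vh).trans (mul_sqrt_mul_sqrt_le_half_add_half_sq_mul (hspos uh) (hspos vh) C0)
  linarith

/-- Céa-type quasi-optimality bound for R-FEM. -/
theorem rfem_cea_quasi_optimality
    {H V : Type*} [NormedAddCommGroup H] [InnerProductSpace ℝ H] [CompleteSpace H]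
    [AddCommGroup V] [Module ℝ V] [FiniteDimensional ℝ V]
    (E : V →ₗ[ℝ] H) (s : V →ₗ[ℝ] V →ₗ[ℝ] ℝ)
    (hssymm : ∀ w v : V, s w v = s v w)
    (hspos : ∀ v : V, 0 ≤ s v v)
    (C0 : ℝ) (hC0 : 1 ≤ C0)
    (hCS : ∀ w v : V, s w v ≤ C0 * Real.sqrt (s w w) * Real.sqrt (s v v))
    (u : H) (uh : V)
    (horth : ∀ vh : V, (inner ℝ (u - E uh) (E vh) : ℝ) = s uh vh) :
    ∀ vh : V, ‖u - E uh‖ ^ 2 + s uh uh ≤ ‖u - E vh‖ ^ 2 + C0 ^ 2 * s vh vh :=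
  rfem_cea_quasi_optimality_general E s hspos C0 hCS u uh horth
end

section
/- Let H be a real Hilbert space with inner product a, V a finite-dimensional real vector space, E : V → H linear, s : V × V → ℝ symmetric positive-semidefinite bilinear satisfying the Cauchy–Schwarz-type bound s(w,v) ≤ C̃₀ s(w,w)^{1/2} s(v,v)^{1/2}. Suppose u ∈ H, u_h ∈ V satisfy the orthogonality a(u − E u_h, E v) = s(u_h, v) for all v ∈ V, and suppose there exists v* ∈ V with E v* = P u, where P is the a-orthogonal projection of H onto the closed subspace E(V), and with s(v*, v*) ≤ δ². Then ‖u − E u_h‖_a² + s(u_h, u_h) ≤ dist_a(u, E(V))² + C̃₀² δ². -/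
/-!
Since `E v*` is the orthogonal projection of `u`, Pythagoras splits the error as
`‖u - E uh‖² = ‖u - E v*‖² + ‖E v* - E uh‖²`, and testing the Galerkin orthogonality with
`v* - uh` gives `‖E v* - E uh‖² + s(uh, uh) = s(uh, v*)`. The cross term `s(uh, v*)` dominates
`s(uh, uh)` and is at most `C̃₀ s(uh, uh)^{1/2} s(v*, v*)^{1/2}`, so the factor `s(uh, uh)^{1/2}`
can be absorbed, leaving `s(uh, v*) ≤ C̃₀² s(v*, v*) ≤ C̃₀² δ²`.
-/

open Metric
open scoped RealInnerProductSpace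

section OrthogonalProjection

variable {F : Type*} [NormedAddCommGroup F] [InnerProductSpace ℝ F]

theorem Submodule.norm_sub_eq_infDist_of_forall_inner_eq_zero (K : Submodule ℝ F) {u p : F}
    (hp : p ∈ K) (horth : ∀ w ∈ K, ⟪u - p, w⟫ = 0) : ‖u - p‖ = infDist u (K : Set F) := by
  rw [(K.norm_eq_iInf_iff_real_inner_eq_zero hp).2 horth, infDist_eq_iInf]
  simp only [dist_eq_norm]

theorem Submodule.norm_sub_sq_eq_of_forall_inner_eq_zero (K : Submodule ℝ F) {u p q : F}
    (hp : p ∈ K) (hq : q ∈ K) (horth : ∀ w ∈ K, ⟪u - p, w⟫ = 0) :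
    ‖u - q‖ ^ 2 = ‖u - p‖ ^ 2 + ‖p - q‖ ^ 2 := by
  have h := norm_add_sq_eq_norm_sq_add_norm_sq_real (horth _ (K.sub_mem hp hq))
  rw [sub_add_sub_cancel] at h
  simpa only [sq] using h

end OrthogonalProjection

theorem norm_sub_sq_add_apply_eq_of_galerkin {H V : Type*} [NormedAddCommGroup H]
    [InnerProductSpace ℝ H] [AddCommGroup V] [Module ℝ V] (E : V →ₗ[ℝ] H)
    (s : V →ₗ[ℝ] V →ₗ[ℝ] ℝ) {u : H} {uh vstar : V}
    (horth : ∀ v : V, ⟪u - E uh, E v⟫ = s uh v)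
    (hproj : ∀ v : V, ⟪u - E vstar, E v⟫ = 0) :
    ‖E vstar - E uh‖ ^ 2 + s uh uh = s uh vstar := by
  have hdiff : E vstar - E uh = (u - E uh) - (u - E vstar) := by abel
  have h : ‖E vstar - E uh‖ ^ 2 = s uh (vstar - uh) := by
    rw [← real_inner_self_eq_norm_sq]
    nth_rewrite 1 [hdiff]
    rw [← map_sub, inner_sub_left, horth, hproj, sub_zero]
  rw [h, map_sub, sub_add_cancel]

theorem le_sq_mul_of_le_of_le_mul_sqrt_mul_sqrt {a b x C : ℝ} (ha : 0 ≤ a) (hb : 0 ≤ b)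
    (hax : a ≤ x) (hx : x ≤ C * √a * √b) : x ≤ C ^ 2 * b := by
  have hamgm : C * √a * √b ≤ (a + C ^ 2 * b) / 2 := by
    nlinarith [sq_nonneg (√a - C * √b), Real.sq_sqrt ha, Real.sq_sqrt hb]
  linarith

theorem rfem_refined_quasi_optimality_general
    {H V : Type*} [NormedAddCommGroup H] [InnerProductSpace ℝ H]
    [AddCommGroup V] [Module ℝ V]
    (E : V →ₗ[ℝ] H) (s : V →ₗ[ℝ] V →ₗ[ℝ] ℝ)
    (hspos : ∀ v : V, 0 ≤ s v v)
    (C0 : ℝ)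
    (hCS : ∀ w v : V, s w v ≤ C0 * Real.sqrt (s w w) * Real.sqrt (s v v))
    (u : H) (uh : V)
    (horth : ∀ v : V, (inner ℝ (u - E uh) (E v) : ℝ) = s uh v)
    (vstar : V) (δ : ℝ)
    -- E v* is the a-orthogonal projection of u onto E(V):
    (hproj : ∀ v : V, (inner ℝ (u - E vstar) (E v) : ℝ) = 0)
    (hvstar : s vstar vstar ≤ δ ^ 2) :
    ‖u - E uh‖ ^ 2 + s uh uh
      ≤ (Metric.infDist u (LinearMap.range E : Set H)) ^ 2 + C0 ^ 2 * δ ^ 2 := by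
  have hperp : ∀ w ∈ LinearMap.range E, ⟪u - E vstar, w⟫ = 0 := by
    rintro _ ⟨v, rfl⟩
    exact hproj v
  have hvstar_mem := LinearMap.mem_range_self E vstar
  have hbest := (LinearMap.range E).norm_sub_eq_infDist_of_forall_inner_eq_zero hvstar_mem hperp
  have hpyth := (LinearMap.range E).norm_sub_sq_eq_of_forall_inner_eq_zero hvstar_mem
    (LinearMap.mem_range_self E uh) hperp
  have hstab := norm_sub_sq_add_apply_eq_of_galerkin E s horth hproj
  have hcons : s uh vstar ≤ C0 ^ 2 * s vstar vstar :=
    le_sq_mul_of_le_of_le_mul_sqrt_mul_sqrt (hspos uh) (hspos vstar)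
      (by linarith [sq_nonneg ‖E vstar - E uh‖]) (hCS uh vstar)
  calc ‖u - E uh‖ ^ 2 + s uh uh = ‖u - E vstar‖ ^ 2 + s uh vstar := by linarith
    _ ≤ infDist u (LinearMap.range E : Set H) ^ 2 + C0 ^ 2 * δ ^ 2 := by
      rw [hbest]
      gcongr
      exact hcons.trans (by gcongr)

/-- Refined quasi-optimality: if E v* realizes the a-orthogonal projection of u
onto E(V) and has small stabilisation, the R-FEM error is bounded by the
best-approximation error plus C̃₀²δ². -/
theorem rfem_refined_quasi_optimality
    {H V : Type*} [NormedAddCommGroup H] [InnerProductSpace ℝ H] [CompleteSpace H]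
    [AddCommGroup V] [Module ℝ V] [FiniteDimensional ℝ V]
    (E : V →ₗ[ℝ] H) (s : V →ₗ[ℝ] V →ₗ[ℝ] ℝ)
    (hssymm : ∀ w v : V, s w v = s v w)
    (hspos : ∀ v : V, 0 ≤ s v v)
    (C0 : ℝ) (hC0 : 0 ≤ C0)
    (hCS : ∀ w v : V, s w v ≤ C0 * Real.sqrt (s w w) * Real.sqrt (s v v))
    (u : H) (uh : V)
    (horth : ∀ v : V, (inner ℝ (u - E uh) (E v) : ℝ) = s uh v)
    (vstar : V) (δ : ℝ) (hδ : 0 ≤ δ)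
    -- E v* is the a-orthogonal projection of u onto E(V):
    (hproj : ∀ v : V, (inner ℝ (u - E vstar) (E v) : ℝ) = 0)
    (hvstar : s vstar vstar ≤ δ ^ 2) :
    ‖u - E uh‖ ^ 2 + s uh uh
      ≤ (Metric.infDist u (LinearMap.range E : Set H)) ^ 2 + C0 ^ 2 * δ ^ 2 :=
  rfem_refined_quasi_optimality_general E s hspos C0 hCS u uh horth vstar δ hproj hvstar
end

section
/- Let n ≥ 1 and let G = (V, E) be the graph whose vertices are the interior lattice points of a triangulated square (regular criss-cross or right-triangle mesh of the unit square with n² subsquares each split into triangles). Define V_h^0 as the space of functions constant on each triangle and V_h^1 ∩ H^1_0 as the space of continuous piecewise-linear functions vanishing on the boundary, and let E_avg : V_h^0 → V_h^1 ∩ H^1_0 be the nodal averaging operator assigning to each interior vertex ν the average of the constant values on the triangles containing ν, and 0 at boundary vertices. Then E_avg is surjective. -/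
/-!
Put `x i j` on the lower and `-x i j` on the upper triangle of each square `(i, j)`. The two
triangles share their diagonal, so the sum over the triangles at an interior vertex `v`
telescopes to `x (v.1 - 1) v.2 - x v.1 (v.2 - 1)`, the values on the two squares touching `v`
off the diagonal. This difference equation is solved by summing the target values along the
antidiagonal chain of squares running from `v` to the boundary (the paper's `ψ_ν`). Aiming at
`#(trianglesAt v) * g v` rather than `g v`, the number of triangles at `v` (six) need only be
shown nonzero, never computed.
-/

namespace CrissCross

/-- Vertices of the `n × n` right-triangle mesh of the unit square. -/
abbrev Vertex (n : ℕ) := Fin (n + 1) × Fin (n + 1)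

/-- Triangles: each subsquare `(i,j)` is split into a lower (`false`) and an
upper (`true`) triangle. -/
abbrev Triangle (n : ℕ) := Fin n × Fin n × Bool

/-- The three vertices of a triangle. The lower triangle of square `(i,j)` has
vertices `(i,j), (i+1,j), (i+1,j+1)`; the upper one `(i,j), (i,j+1), (i+1,j+1)`. -/
def verts {n : ℕ} (T : Triangle n) : Finset (Vertex n) :=
  match T with
  | (i, j, false) => {(i.castSucc, j.castSucc), (i.succ, j.castSucc), (i.succ, j.succ)}
  | (i, j, true) => {(i.castSucc, j.castSucc), (i.castSucc, j.succ), (i.succ, j.succ)}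

/-- A vertex is interior if it lies strictly inside the square. -/
def Interior {n : ℕ} (v : Vertex n) : Prop :=
  v.1 ≠ 0 ∧ v.1 ≠ Fin.last n ∧ v.2 ≠ 0 ∧ v.2 ≠ Fin.last n

instance {n : ℕ} (v : Vertex n) : Decidable (Interior v) := by
  unfold Interior; infer_instance

/-- The nodal averaging recovery operator: at each interior vertex take the
average of the constant values over all triangles containing the vertex,
and `0` at boundary vertices. -/
noncomputable def Eavg {n : ℕ} (u : Triangle n → ℝ) (v : Vertex n) : ℝ :=
  if Interior v then
    (∑ T ∈ Finset.univ.filter (fun T : Triangle n => v ∈ verts T), u T)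
      / (Finset.univ.filter (fun T : Triangle n => v ∈ verts T)).card
  else 0

open Finset

variable {n : ℕ}

lemma Interior.bounds {v : Vertex n} (hv : Interior v) :
    1 ≤ (v.1 : ℕ) ∧ (v.1 : ℕ) < n ∧ 1 ≤ (v.2 : ℕ) ∧ (v.2 : ℕ) < n := by
  obtain ⟨h1, h2, h3, h4⟩ := hv
  simp only [ne_eq, Fin.ext_iff, Fin.val_zero, Fin.val_last] at h1 h2 h3 h4
  omega

def trianglesAt (v : Vertex n) : Finset (Triangle n) :=
  univ.filter (v ∈ verts ·)

lemma Eavg_of_interior (u : Triangle n → ℝ) {v : Vertex n} (hv : Interior v) :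
    Eavg u v = (∑ T ∈ trianglesAt v, u T) / #(trianglesAt v) :=
  if_pos hv

lemma trianglesAt_nonempty {v : Vertex n} (hv : Interior v) : (trianglesAt v).Nonempty := by
  obtain ⟨hp, hpn, hq, hqn⟩ := hv.bounds
  refine ⟨(⟨v.1 - 1, by omega⟩, ⟨v.2 - 1, by omega⟩, false), mem_filter.2 ⟨mem_univ _, ?_⟩⟩
  simp only [verts, mem_insert, mem_singleton, Prod.ext_iff, Fin.ext_iff, Fin.val_succ,
    Fin.val_castSucc]
  omega

lemma sum_ite_eq_of_injective {α β M : Type*} [Fintype α] [DecidableEq β] [AddCommMonoid M]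
    {φ : α → β} (hφ : Function.Injective φ) (f : α → M) {a : α} {c : β} (ha : φ a = c) :
    ∑ b, (if c = φ b then f b else 0) = f a := by
  subst ha
  rw [Fintype.sum_eq_single a fun b hb => if_neg (hφ.ne hb.symm), if_pos rfl]

section SignedLift

variable {G : Type*} [AddCommGroup G]

def signedLift (x : ℕ → ℕ → G) : Triangle n → G
  | (i, j, false) => x i j
  | (i, j, true) => -x i j

lemma signedLift_square (x : ℕ → ℕ → G) (v : Vertex n) (ij : Fin n × Fin n) :
    ((if v ∈ verts (ij.1, ij.2, true) then signedLift x (ij.1, ij.2, true) else 0) +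
      if v ∈ verts (ij.1, ij.2, false) then signedLift x (ij.1, ij.2, false) else 0) =
      (if v = Prod.map Fin.succ Fin.castSucc ij then x ij.1 ij.2 else 0) -
        if v = Prod.map Fin.castSucc Fin.succ ij then x ij.1 ij.2 else 0 := by
  simp only [verts, signedLift, Prod.map, mem_insert, mem_singleton, Prod.ext_iff, Fin.ext_iff,
    Fin.val_succ, Fin.val_castSucc]
  split_ifs <;> first | omega | abel

lemma sum_signedLift_trianglesAt (x : ℕ → ℕ → G) {v : Vertex n} (hv : Interior v) :
    ∑ T ∈ trianglesAt v, signedLift x T = x (v.1 - 1) v.2 - x v.1 (v.2 - 1) := by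
  obtain ⟨hp, hpn, hq, hqn⟩ := hv.bounds
  have hE : Prod.map Fin.succ Fin.castSucc
      ((⟨v.1 - 1, by omega⟩, ⟨v.2, hqn⟩) : Fin n × Fin n) = v := by
    ext <;> simp; omega
  have hN : Prod.map Fin.castSucc Fin.succ
      ((⟨v.1, hpn⟩, ⟨v.2 - 1, by omega⟩) : Fin n × Fin n) = v := by
    ext <;> simp; omega
  simp only [trianglesAt, sum_filter, Fintype.sum_prod_type, Fintype.sum_bool]
  rw [← Fintype.sum_prod_type']
  simp only [signedLift_square]
  rw [sum_sub_distrib,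
    sum_ite_eq_of_injective ((Fin.succ_injective _).prodMap (Fin.castSucc_injective _)) _ hE,
    sum_ite_eq_of_injective ((Fin.castSucc_injective _).prodMap (Fin.succ_injective _)) _ hN]

end SignedLift

def chainSum {M : Type*} [AddCommMonoid M] (c : ℕ → ℕ → M) (a b : ℕ) : M :=
  ∑ k ∈ range (b + 1), c (a + 1 + k) (b - k)

lemma chainSum_succ_right {M : Type*} [AddCommMonoid M] (c : ℕ → ℕ → M) (a b : ℕ) :
    chainSum c a (b + 1) = c (a + 1) (b + 1) + chainSum c (a + 1) b := by
  rw [chainSum, sum_range_succ', add_comm, chainSum]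
  simp only [add_zero, Nat.sub_zero, Nat.add_sub_add_right]
  exact congrArg _ (sum_congr rfl fun k _ => by congr 1; omega)

lemma chainSum_sub {G : Type*} [AddCommGroup G] (c : ℕ → ℕ → G) {p q : ℕ} (hp : 1 ≤ p)
    (hq : 1 ≤ q) : chainSum c (p - 1) q - chainSum c p (q - 1) = c p q := by
  obtain ⟨p, rfl⟩ := Nat.exists_eq_add_of_le' hp
  obtain ⟨q, rfl⟩ := Nat.exists_eq_add_of_le' hq
  simp only [Nat.add_sub_cancel, chainSum_succ_right, add_sub_cancel_right]

theorem Eavg_surjective_general (n : ℕ)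
    (g : Vertex n → ℝ) (hg : ∀ v : Vertex n, ¬ Interior v → g v = 0) :
    ∃ u : Triangle n → ℝ, ∀ v : Vertex n, Eavg u v = g v := by
  let w : Vertex n → ℝ := fun v => #(trianglesAt v) * g v
  refine ⟨signedLift (chainSum fun p q => w (Fin.ofNat _ p, Fin.ofNat _ q)), fun v => ?_⟩
  by_cases hv : Interior v
  · obtain ⟨hp, -, hq, -⟩ := hv.bounds
    have hcard : (#(trianglesAt v) : ℝ) ≠ 0 := by
      exact_mod_cast (trianglesAt_nonempty hv).card_pos.ne'
    rw [Eavg_of_interior _ hv, sum_signedLift_trianglesAt _ hv, chainSum_sub _ hp hq,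
      Fin.ofNat_val_eq_self, Fin.ofNat_val_eq_self, div_eq_iff hcard, mul_comm]
  · rw [Eavg, if_neg hv, hg v hv]

/-- Lemma 4.3 (structured mesh): the averaging recovery from piecewise constants
onto conforming piecewise linears vanishing on the boundary is surjective, i.e.
every conforming function (identified with its nodal values, vanishing at
boundary vertices) is the recovery of some piecewise constant function. -/
theorem Eavg_surjective (n : ℕ) (hn : 1 ≤ n)
    (g : Vertex n → ℝ) (hg : ∀ v : Vertex n, ¬ Interior v → g v = 0) :
    ∃ u : Triangle n → ℝ, ∀ v : Vertex n, Eavg u v = g v :=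
  Eavg_surjective_general n g hg

end CrissCross
end
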